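/- Let D be a Gauss diagram of a virtual knot with exactly one overbridge. Then D can be transformed, by a finite sequence of welded moves (exchanging two consecutive arrowtails on the same strand) followed by Reidemeister I moves (deleting an isolated chord whose arrowhead and arrowtail are adjacent on the circle with no other chord endpoints between them), into the empty Gauss diagram. Hence every virtual bridge number one knot is welded equivalent to the unknot. -/

import Mathlib

/-- A symbol in a Gauss code: an over- or under-crossing passage, with a chord
label and a sign. Arrowtails of the Gauss diagram correspond to over-symbols,
arrowheads to under-symbols. -/
inductive GSym : Type
  | over (label : ℕ) (sign : Bool)
  | under (label : ℕ) (sign : Bool)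
deriving DecidableEq, Repr

namespace GSym
def isOver : GSym → Bool | GSym.over _ _ => true | _ => false
def isUnder : GSym → Bool | under _ _ => true | _ => false
def label : GSym → ℕ | GSym.over n _ => n | under n _ => n
end GSym

/-- A Gauss code: a finite list of circles, each a cyclic word of symbols. -/
abbrev GCode := List (List GSym)

namespace GCode

/-- Validity: every chord label that occurs does so exactly once as an over
symbol and once as an under symbol, with matching signs. -/
def Valid (g : GCode) : Prop :=
  ∀ (n : ℕ) (s : Bool),
    g.flatten.count (GSym.over n s) = g.flatten.count (GSym.under n s) ∧
    g.flatten.count (GSym.over n s) + g.flatten.count (GSym.over n (!s)) ≤ 1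

/-- The number of overbridges (strands between consecutive arrowheads that
contain at least one arrowtail) on one circle. -/
def circleBridges (w : List GSym) : ℕ :=
  if w.any GSym.isUnder then
    ((w.rotate (w.findIdx GSym.isUnder)).splitOnP GSym.isUnder).countP
      (fun b => b.any GSym.isOver)
  else if w.any GSym.isOver then 1 else 0

/-- The bridge number of a Gauss code: the total number of overbridges. -/
def vb (g : GCode) : ℕ := (g.map circleBridges).sum

/-- Fill a context with `m` holes by the given blocks of symbols. -/
def fill {m : ℕ} (C : List (List (GSym ⊕ Fin m))) (f : Fin m → List GSym) : GCode :=
  C.map fun w => w.flatMap fun x => match x with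
    | Sum.inl a => [a]
    | Sum.inr i => f i

/-- A context has exactly one occurrence of each hole. -/
def IsContext {m : ℕ} (C : List (List (GSym ⊕ Fin m))) : Prop :=
  ∀ i : Fin m, C.flatten.count (Sum.inr i) = 1

open GSym in
/-- Reidemeister moves on Gauss codes, together with the structural moves of
permuting the circles, rotating a cyclic word, and injectively relabelling the
chords. -/
inductive RMove : GCode → GCode → Prop
  | perm {g g' : GCode} : List.Perm g g' → RMove g g'
  | rotate (a b : List GSym) (rest : GCode) : RMove ((a ++ b) :: rest) ((b ++ a) :: rest)
  | relabel (g : GCode) (f : ℕ → ℕ) (hf : Function.Injective f) :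
      RMove g (g.map (List.map fun x => match x with
        | GSym.over n s => GSym.over (f n) s
        | under n s => under (f n) s))
  | r1 (C : List (List (GSym ⊕ Fin 1))) (hC : IsContext C) (n : ℕ) (s : Bool) :
      RMove (fill C ![[GSym.over n s, under n s]]) (fill C ![[]])
  | r1' (C : List (List (GSym ⊕ Fin 1))) (hC : IsContext C) (n : ℕ) (s : Bool) :
      RMove (fill C ![[under n s, GSym.over n s]]) (fill C ![[]])
  | r2 (C : List (List (GSym ⊕ Fin 2))) (hC : IsContext C) (n m' : ℕ) (s : Bool) :
      RMove (fill C ![[GSym.over n s, GSym.over m' (!s)], [under m' (!s), under n s]])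
            (fill C ![[], []])
  | r2' (C : List (List (GSym ⊕ Fin 2))) (hC : IsContext C) (n m' : ℕ) (s : Bool) :
      RMove (fill C ![[GSym.over n s, GSym.over m' (!s)], [under n s, under m' (!s)]])
            (fill C ![[], []])
  | r3 (C : List (List (GSym ⊕ Fin 3))) (hC : IsContext C) (a b c : ℕ) :
      RMove (fill C ![[GSym.over a true, GSym.over b true],
                      [under a true, GSym.over c true],
                      [under b true, under c true]])
            (fill C ![[GSym.over b true, GSym.over a true],
                      [GSym.over c true, under a true],
                      [under c true, under b true]])

/-- Equivalence of Gauss codes under the Reidemeister moves. -/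
def REquiv : GCode → GCode → Prop := Relation.EqvGen RMove

/-- The cyclic word of circle `c`. -/
def circ (g : GCode) (c : ℕ) : List GSym := g.getD c []

/-- The symbol at position `i` of circle `c`. -/
def symAt (g : GCode) (c i : ℕ) : Option GSym := (g.circ c)[i]?

/-- The representative position of the strand containing position `i` of circle
`c`: the position of the first under-symbol at or (cyclically) after `i`.  On a
circle with no under-symbols every position represents the unique strand `0`. -/
def strandRep (g : GCode) (c i : ℕ) : ℕ :=
  let w := g.circ c
  if w.any GSym.isUnder then (i + (w.rotate i).findIdx GSym.isUnder) % w.length else 0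

/-- A coloring move on a Gauss code: a partial coloring assigns an optional
color to each strand representative `(circle, position)`; the color of a strand
may be extended across an arrowhead whose chord's arrowtail lies on an already
colored strand. -/
def CMove (g : GCode) {k : ℕ} (f f' : ℕ → ℕ → Option (Fin k)) : Prop :=
  ∃ (n : ℕ) (s : Bool) (co io cu iu ap aq : ℕ),
    g.symAt co io = some (GSym.over n s) ∧
    g.symAt cu iu = some (GSym.under n s) ∧
    ((ap = iu ∧ aq = g.strandRep cu (iu + 1)) ∨ (aq = iu ∧ ap = g.strandRep cu (iu + 1))) ∧
    ap ≠ aq ∧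
    (f co (g.strandRep co io)).isSome ∧ (f cu ap).isSome ∧ f cu aq = none ∧
    f' = fun c i => if c = cu ∧ i = aq then f cu ap else f c i

/-- `g` is `k`-meridionally colorable: `k` seed strands receive the `k`
distinct colors and a finite sequence of coloring moves colors every strand. -/
def Colorable (g : GCode) (k : ℕ) : Prop :=
  ∃ (m : ℕ) (F : ℕ → ℕ → ℕ → Option (Fin k)) (seeds : Fin k → ℕ × ℕ),
    (∀ t : Fin k, (seeds t).1 < g.length ∧ (seeds t).2 < (g.circ (seeds t).1).length ∧
      g.strandRep (seeds t).1 (seeds t).2 = (seeds t).2 ∧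
      F 0 (seeds t).1 (seeds t).2 = some t) ∧
    (∀ c i : ℕ, (F 0 c i).isSome → ∃ t : Fin k, seeds t = (c, i)) ∧
    (∀ j < m, CMove g (F j) (F (j + 1))) ∧
    (∀ c < g.length, ∀ i < (g.circ c).length, (F m c (g.strandRep c i)).isSome)

/-- The Wirtinger number of a Gauss code. -/
noncomputable def wirt (g : GCode) : ℕ := sInf {k | Colorable g k}

end GCode

open GCode in
/-- Welded moves on a (cyclic) Gauss word: exchanging two consecutive
arrowtails, together with rotation of the cyclic word. -/
inductive WeldMove : List GSym → List GSym → Prop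
  | swap (a b : List GSym) (n m : ℕ) (s s' : Bool) :
      WeldMove (a ++ [GSym.over n s, GSym.over m s'] ++ b)
               (a ++ [GSym.over m s', GSym.over n s] ++ b)
  | rot (a b : List GSym) : WeldMove (a ++ b) (b ++ a)

open GCode in
/-- Reidemeister I deletions on a (cyclic) Gauss word: deleting an isolated
chord whose arrowtail and arrowhead are adjacent with nothing between them,
together with rotation of the cyclic word. -/
inductive R1Del : List GSym → List GSym → Prop
  | del (a b : List GSym) (n : ℕ) (s : Bool) :
      R1Del (a ++ [GSym.over n s, GSym.under n s] ++ b) (a ++ b)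
  | del' (a b : List GSym) (n : ℕ) (s : Bool) :
      R1Del (a ++ [GSym.under n s, GSym.over n s] ++ b) (a ++ b)
  | rot (a b : List GSym) : R1Del (a ++ b) (b ++ a)

/-!
A word with a single overbridge is, up to rotation, `o ++ U` with `o` a run of arrowtails and
`U` a run of arrowheads. Validity makes `o` a permutation of the
tails of the chords of `U`, so welded moves sort `o` into the reverse order of `U`. The chords are
then nested around the junction of `o` and `U`, and Reidemeister I deletions remove them from the
innermost outwards.
-/

namespace List

variable {α : Type*} (p : α → Bool)

theorem forall_of_countP_splitOnP_eq_zero :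
    ∀ {t : List α}, (t.splitOnP p).countP (fun b => b.any fun x => !p x) = 0 → ∀ x ∈ t, p x
  | [], _ => by simp
  | x :: t, h => by
    rw [splitOnP_cons_eq_if_modifyHead] at h
    by_cases hx : p x
    · simp only [hx, if_true, countP_cons, any_nil] at h
      simpa [hx] using forall_of_countP_splitOnP_eq_zero (by simpa using h)
    · obtain ⟨b, bs, hb⟩ := exists_cons_of_ne_nil (splitOnP_ne_nil p t)
      simp [hx, hb] at h

theorem exists_eq_append_of_countP_splitOnP_eq_one :
    ∀ {t : List α}, (t.splitOnP p).countP (fun b => b.any fun x => !p x) = 1 →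
      ∃ a o b, t = a ++ o ++ b ∧ (∀ x ∈ a, p x) ∧ (∀ x ∈ o, p x = false) ∧ ∀ x ∈ b, p x
  | [], h => by simp at h
  | x :: t, h => by
    rw [splitOnP_cons_eq_if_modifyHead] at h
    by_cases hx : p x
    · simp only [hx, if_true, countP_cons, any_nil] at h
      obtain ⟨a, o, b, rfl, ha, ho, hb⟩ :=
        exists_eq_append_of_countP_splitOnP_eq_one (by simpa using h)
      exact ⟨x :: a, o, b, rfl, by simpa [hx] using ha, ho, hb⟩
    · obtain ⟨c, cs, hc⟩ := exists_cons_of_ne_nil (splitOnP_ne_nil p t)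
      have hcs : cs.countP (fun b => b.any fun x => !p x) = 0 := by
        simpa [hx, hc, countP_cons] using h
      by_cases hrun : c.any fun x => !p x
      · have ht : (t.splitOnP p).countP (fun b => b.any fun x => !p x) = 1 := by
          simpa [hc, countP_cons, hrun] using hcs
        obtain ⟨a, o, b, rfl, ha, ho, hb⟩ := exists_eq_append_of_countP_splitOnP_eq_one ht
        -- a nonempty `a` would start `t` with a separator and make the first block `c` empty
        obtain rfl : a = [] := by
          rcases a with _ | ⟨y, a⟩
          · rfl
          · have hc' := congrArg head? hc.symm
            simp only [cons_append, splitOnP_cons_eq_if_modifyHead, ha y mem_cons_self] at hc'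
            simp_all
        exact ⟨[], x :: o, b, rfl, by simp, by simpa [hx] using ho, hb⟩
      · have ht : (t.splitOnP p).countP (fun b => b.any fun x => !p x) = 0 := by
          simpa [hc, countP_cons, hrun] using hcs
        exact ⟨[], [x], t, rfl, by simp, by simpa using hx, forall_of_countP_splitOnP_eq_zero p ht⟩

end List

namespace GSym

def mate : GSym → GSym
  | GSym.over n s => under n s
  | under n s => GSym.over n s

theorem mate_involutive : Function.Involutive mate := by
  intro x
  cases x <;> rfl

theorem isOver_eq_not_isUnder : isOver = fun x => !x.isUnder := by
  funext x
  cases x <;> rfl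

theorem isUnder_iff {x : GSym} : x.isUnder ↔ ∃ n s, x = under n s := by
  cases x <;> simp [isUnder]

theorem isUnder_eq_false_iff {x : GSym} : x.isUnder = false ↔ ∃ n s, x = GSym.over n s := by
  cases x <;> simp [isUnder]

theorem perm_map_mate_of_count_eq {o U : List GSym} (ho : ∀ x ∈ o, x.isUnder = false)
    (hU : ∀ x ∈ U, x.isUnder)
    (hcount : ∀ n s, (o ++ U).count (GSym.over n s) = (o ++ U).count (under n s)) :
    o.Perm (U.map mate) := by
  have hU_over : ∀ n s, U.count (GSym.over n s) = 0 := fun n s =>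
    List.count_eq_zero.mpr fun h => by simpa [isUnder] using hU _ h
  have ho_under : ∀ n s, o.count (under n s) = 0 := fun n s =>
    List.count_eq_zero.mpr fun h => by simpa [isUnder] using ho _ h
  refine List.perm_iff_count.mpr fun x => ?_
  have hmap := List.count_map_of_injective U mate mate_involutive.injective (mate x)
  rw [mate_involutive x] at hmap
  rw [hmap]
  rcases x with ⟨n, s⟩ | ⟨n, s⟩
  · simpa [hU_over, ho_under, mate] using hcount n s
  · simp [hU_over, ho_under, mate]

end GSym

open GSym

namespace GCode

theorem any_isUnder_of_circleBridges_eq_one {w : List GSym}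
    (hcount : ∀ n s, w.count (GSym.over n s) = w.count (under n s)) (h : circleBridges w = 1) :
    w.any isUnder := by
  by_contra hu
  rw [circleBridges, if_neg hu] at h
  split_ifs at h with ho
  obtain ⟨x, hxw, hx⟩ := List.any_eq_true.mp ho
  obtain ⟨n, s, rfl⟩ : ∃ n s, x = GSym.over n s := by cases x <;> simp_all [isOver]
  have : under n s ∈ w := List.count_pos_iff.mp (hcount n s ▸ List.count_pos_iff.mpr hxw)
  exact hu (List.any_eq_true.mpr ⟨_, this, rfl⟩)

theorem exists_isRotated_append_of_circleBridges_eq_one {w : List GSym} (hu : w.any isUnder)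
    (h : circleBridges w = 1) :
    ∃ o U, (∀ x ∈ o, x.isUnder = false) ∧ (∀ x ∈ U, x.isUnder) ∧ w ~r o ++ U := by
  set j := w.findIdx isUnder
  have hj : j < w.length := List.findIdx_lt_length_of_exists (List.any_eq_true.mp hu)
  obtain ⟨n, s, hwj⟩ := isUnder_iff.mp (List.findIdx_getElem (w := hj))
  have hrot : w.rotate j = under n s :: (w.drop (j + 1) ++ w.take j) := by
    rw [List.rotate_eq_drop_append_take hj.le, List.drop_eq_getElem_cons hj, hwj, List.cons_append]
  rw [circleBridges, if_pos hu, hrot, isOver_eq_not_isUnder, List.splitOnP_cons_eq_if_modifyHead,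
    if_pos (show (under n s).isUnder = true from rfl), List.countP_cons] at h
  obtain ⟨a, o, b, hab, ha, ho, hb⟩ :=
    List.exists_eq_append_of_countP_splitOnP_eq_one isUnder (by simpa using h)
  refine ⟨o, b ++ under n s :: a, ho, ?_, List.IsRotated.trans ⟨j, hrot⟩ ?_⟩
  · simp only [List.mem_append, List.mem_cons]
    rintro x (hx | rfl | hx)
    exacts [hb x hx, rfl, ha x hx]
  · rw [hab]
    simpa using List.isRotated_append (l := under n s :: a) (l' := o ++ b)

end GCode

theorem WeldMove.reflTransGen_of_perm {o o' : List GSym} (h : o.Perm o')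
    (ho : ∀ x ∈ o, x.isUnder = false) (l r : List GSym) :
    Relation.ReflTransGen WeldMove (l ++ o ++ r) (l ++ o' ++ r) := by
  induction h generalizing l with
  | nil => rfl
  | cons x _ ih =>
    simpa using ih (fun y hy => ho y (List.mem_cons_of_mem x hy)) (l ++ [x])
  | swap x y t =>
    obtain ⟨n, s, rfl⟩ := isUnder_eq_false_iff.mp (ho y (by simp))
    obtain ⟨m, s', rfl⟩ := isUnder_eq_false_iff.mp (ho x (by simp))
    simpa using Relation.ReflTransGen.single (WeldMove.swap l (t ++ r) n m s s')
  | trans h₁ _ ih₁ ih₂ =>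
    exact (ih₁ ho l).trans (ih₂ (fun y hy => ho y (h₁.mem_iff.mpr hy)) l)

theorem WeldMove.of_isRotated {l l' : List GSym} (h : l ~r l') : WeldMove l l' := by
  obtain ⟨k, hk, rfl⟩ := List.isRotated_iff_mod.mp h
  rw [List.rotate_eq_drop_append_take hk]
  simpa using WeldMove.rot (l.take k) (l.drop k)

theorem R1Del.reflTransGen_reverse_map_mate_append {U : List GSym} (hU : ∀ x ∈ U, x.isUnder) :
    Relation.ReflTransGen R1Del ((U.map mate).reverse ++ U) [] := by
  induction U with
  | nil => rfl
  | cons u U ih =>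
    obtain ⟨n, s, rfl⟩ := isUnder_iff.mp (hU u List.mem_cons_self)
    refine .head ?_ (ih fun x hx => hU x (List.mem_cons_of_mem _ hx))
    simpa [mate] using R1Del.del ((U.map mate).reverse) U n s

open GCode in
/-- A Gauss diagram of a virtual knot with exactly one overbridge can be
transformed by a finite sequence of welded moves followed by Reidemeister I
deletions into the empty Gauss diagram; hence every virtual bridge number one
knot is welded equivalent to the unknot. -/
theorem one_bridge_welded_trivial (w : List GSym) (hv : Valid [w])
    (hone : circleBridges w = 1) :
    ∃ w' : List GSym,
      Relation.ReflTransGen WeldMove w w' ∧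
      Relation.ReflTransGen R1Del w' [] := by
  have hcount : ∀ n s, w.count (GSym.over n s) = w.count (under n s) := fun n s => by
    simpa using (hv n s).1
  have hu := any_isUnder_of_circleBridges_eq_one hcount hone
  obtain ⟨o, U, ho, hU, hrot⟩ := exists_isRotated_append_of_circleBridges_eq_one hu hone
  have hperm : o.Perm (U.map mate).reverse := by
    refine (perm_map_mate_of_count_eq ho hU fun n s => ?_).trans (List.reverse_perm _).symm
    simpa only [hrot.perm.count_eq] using hcount n s
  refine ⟨(U.map mate).reverse ++ U, .head (WeldMove.of_isRotated hrot) ?_,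
    R1Del.reflTransGen_reverse_map_mate_append hU⟩
  simpa using WeldMove.reflTransGen_of_perm hperm ho [] U
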